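/- The multi-controlled-X ladder operator L_α is a bijection on 𝔽₂^{α_{k−2}+1}, and the composition of two interleaved single-layer MCX circuits with a recursively defined ladder on half the gates equals L_α: specifically, with U_L, U_{X'}, U_R as defined in Algorithm 2, U_R ∘ U_{X'} ∘ U_L = L_α for every vector α of k−1 strictly increasing nonnegative integers with k ≥ 3. -/

import Mathlib

/-! The MCX ladder operator `L_α` and its decomposition (Algorithm 2).
States are `ℕ`-indexed bit vectors (`ℕ → ZMod 2`); all operators act as the identity
on the wires above `α_{k−2}`. -/

/-- One MCX gate with controls the wires in `[lo, hi)` and target `hi`. -/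
def applyGate (s : ℕ → ZMod 2) (lo hi : ℕ) : ℕ → ZMod 2 :=
  fun j => if j = hi then s j + ∏ t ∈ Finset.Ico lo hi, s t else s j

/-- The ladder operator `L_α` for a vector `α` of `k−1` integers (given as the first
`k−1` values of `α : ℕ → ℕ`): wire `α_0` receives `⊕ ∏_{j<α_0} x_j`, and wire `α_i`
(for `1 ≤ i ≤ k−2`) receives `⊕ ∏_{j=α_{i−1}}^{α_i−1} x_j` (products of the input
values `x`); all other wires are unchanged. -/
def Lalpha (k : ℕ) (α : ℕ → ℕ) (x : ℕ → ZMod 2) : ℕ → ZMod 2 :=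
  (List.range (k - 1)).foldl
    (fun s i => fun j =>
      if j = α i then
        x (α i) + ∏ t ∈ Finset.Ico (if i = 0 then 0 else α (i - 1)) (α i), x t
      else s j)
    x

/-- The layer `U_L`: the MCX gates with targets `α_{2i−1}` (controls
`α_{2i−2}, …, α_{2i−1}−1`) for `i = 1, …, ⌈k/2⌉−2`, plus the gate with target
`α_{k−2}` and controls `α_{k−3}, …, α_{k−2}−1`. -/
def UL (k : ℕ) (α : ℕ → ℕ) (x : ℕ → ZMod 2) : ℕ → ZMod 2 :=
  applyGate
    ((List.range' 1 ((k + 1) / 2 - 2)).foldl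
      (fun s i => applyGate s (α (2 * i - 2)) (α (2 * i - 1))) x)
    (α (k - 3)) (α (k - 2))

/-- The layer `U_R`: the MCX gate with target `α_0` (controls `0, …, α_0−1`) and the
gates with targets `α_{2i}` (controls `α_{2i−1}, …, α_{2i}−1`) for
`i = 1, …, ⌈k/2⌉−2`. -/
def UR (k : ℕ) (α : ℕ → ℕ) (x : ℕ → ZMod 2) : ℕ → ZMod 2 :=
  (List.range' 1 ((k + 1) / 2 - 2)).foldl
    (fun s i => applyGate s (α (2 * i - 1)) (α (2 * i)))
    (applyGate x 0 (α 0))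

/-- The list of wires `X'` used by the recursive call of Algorithm 2:
`α_0`, then for `i = 1, …, ⌈k/2⌉−2` the wires `α_{2i−2}+1, …, α_{2i−1}−1` and
`α_{2i−1}+1, …, α_{2i}`, and finally `α_{k−4}+1, …, α_{k−3}` when `k` is even. -/
def Xlist (k : ℕ) (α : ℕ → ℕ) : List ℕ :=
  α 0 ::
    ((List.range' 1 ((k + 1) / 2 - 2)).flatMap (fun i =>
        List.range' (α (2 * i - 2) + 1) (α (2 * i - 1) - α (2 * i - 2) - 1) ++
        List.range' (α (2 * i - 1) + 1) (α (2 * i) - α (2 * i - 1)))) ++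
    (if k % 2 = 0 then List.range' (α (k - 4) + 1) (α (k - 3) - α (k - 4)) else [])

/-- The vector `α'` of the recursive call: `α'_i = α_{2(i+1)} − α_0 − (i+1)` for the
loop entries, and `α_{k−3} − α_0 − k/2 + 2` as the last entry when `k` is even. -/
def alpha' (k : ℕ) (α : ℕ → ℕ) (i : ℕ) : ℕ :=
  if i + 1 ≤ (k + 1) / 2 - 2 then α (2 * (i + 1)) - α 0 - (i + 1)
  else α (k - 3) - α 0 + 2 - k / 2

/-- The middle operator `U_{X'}`: the ladder `L_{α'}` applied to the subsequence of
wires `X'`, acting as the identity on all the other wires. -/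
def UX (k : ℕ) (α : ℕ → ℕ) (x : ℕ → ZMod 2) : ℕ → ZMod 2 :=
  fun w =>
    if w ∈ Xlist k α then
      Lalpha (k / 2) (alpha' k α) (fun p => x ((Xlist k α).getD p 0))
        ((Xlist k α).idxOf w)
    else x w

/-!
Each wire `w` of `L_α x` is `x w` plus a product of input wires below `w`, so `L_α` is
unitriangular, hence bijective. For the decomposition, `X'` is cut into consecutive blocks: the
`t`-th gate of `L_{α'}` targets the wire following the `t`-th block and is controlled by exactly
that block, which for the target `α_{2i}` consists of the wires of `[α_{2i−2}, α_{2i})` other than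
`α_{2i−1}`. Writing `P` and `Q` for the products of `x` over `[α_{2i−2}, α_{2i−1})` and
`(α_{2i−1}, α_{2i})`, `U_L` adds `P` to wire `α_{2i−1}`, `U_{X'}` adds `P Q` to wire `α_{2i}`, and
`U_R` adds `(x_{α_{2i−1}} + P) Q` to it; over `𝔽₂` the total is `x_{α_{2i−1}} Q`, the update made
by `L_α`. Every other target of `L_α` is updated by exactly one of the three layers, with the
same controls.
-/

theorem List.cons_flatMap_range_append_singleton {β : Type*} (a : ℕ → β) (P : ℕ → List β)
    (n : ℕ) :
    a 0 :: (List.range n).flatMap (fun i => P i ++ [a (i + 1)]) =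
      (List.range n).flatMap (fun i => a i :: P i) ++ [a n] := by
  induction n with
  | zero => rfl
  | succ n ih =>
    rw [List.range_succ, List.flatMap_append, List.flatMap_append, ← List.cons_append, ih]
    simp

theorem List.range'_succ_sub_eq_append {a b : ℕ} (h : a < b) :
    List.range' (a + 1) (b - a) = List.range' (a + 1) (b - a - 1) ++ [b] := by
  obtain ⟨n, hn⟩ : ∃ n, b - a = n + 1 := ⟨b - a - 1, by omega⟩
  rw [hn, List.range'_concat, Nat.add_sub_cancel]
  congr
  omega

theorem List.prod_map_range'_eq_prod_Ioo {M : Type*} [CommMonoid M] (f : ℕ → M) (a b : ℕ) :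
    ((List.range' (a + 1) (b - a - 1)).map f).prod = ∏ w ∈ Finset.Ioo a b, f w := by
  rw [Nat.Ioo_eq_range']
  rfl

theorem List.prod_Ico_getD_append {M β : Type*} [CommMonoid M] (A B C : List β) (d : β)
    (f : β → M) :
    ∏ p ∈ Finset.Ico A.length (A.length + B.length), f ((A ++ (B ++ C)).getD p d) =
      (B.map f).prod := by
  rw [Finset.prod_Ico_eq_prod_range, Nat.add_sub_cancel_left, Finset.prod_range,
    ← Fin.prod_univ_fun_getElem]
  refine Fintype.prod_congr _ _ fun i => ?_
  rw [List.getD_append_right _ _ _ _ (Nat.le_add_right _ _), Nat.add_sub_cancel_left,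
    List.getD_append _ _ _ _ i.2, List.getD_eq_getElem]

theorem bijective_of_unitriangular {G : Type*} [AddCommGroup G] (F : (ℕ → G) → ℕ → G)
    (hF : ∀ x x' w, (∀ t < w, x t = x' t) → F x w - x w = F x' w - x' w) :
    Function.Bijective F := by
  refine ⟨fun x x' hxx' => funext fun w => ?_, fun y => ?_⟩
  · induction w using Nat.strong_induction_on with
    | _ w ih => simpa [hxx'] using hF x x' w ih
  · let x : ℕ → G := Nat.strongRec fun w r =>
      let x' : ℕ → G := fun t => if h : t < w then r t h else 0
      y w - (F x' w - x' w)
    refine ⟨x, funext fun w => ?_⟩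
    have hx : x w = y w - (F x w - x w) := by
      rw [← hF (fun t => if h : t < w then x t else 0) x w fun t ht => dif_pos ht]
      exact Nat.strongRec_eq _ w
    rwa [eq_sub_iff_add_eq, add_sub_cancel] at hx

namespace MCXLadder

open Finset

section Gates

theorem applyGate_of_ne {s : ℕ → ZMod 2} {lo hi j : ℕ} (h : j ≠ hi) :
    applyGate s lo hi j = s j :=
  if_neg h

theorem applyGate_self (s : ℕ → ZMod 2) (lo hi : ℕ) :
    applyGate s lo hi hi = s hi + ∏ t ∈ Ico lo hi, s t :=
  if_pos rfl

variable (lo tgt : ℕ → ℕ)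

theorem foldl_applyGate_of_forall_ne (L : List ℕ) (x : ℕ → ZMod 2) {j : ℕ}
    (h : ∀ i ∈ L, tgt i ≠ j) :
    L.foldl (fun s i => applyGate s (lo i) (tgt i)) x j = x j := by
  induction L generalizing x with
  | nil => rfl
  | cons a L ih =>
    rw [List.foldl_cons, ih _ fun i hi => h i (List.mem_cons_of_mem _ hi)]
    exact applyGate_of_ne (h a List.mem_cons_self).symm

theorem foldl_applyGate_target {L : List ℕ} (x : ℕ → ZMod 2) {i : ℕ} (hi : i ∈ L)
    (hdistinct : L.Pairwise fun a b => tgt a ≠ tgt b)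
    (hcontrols : ∀ a ∈ L, ∀ b ∈ L, tgt b ∉ Ico (lo a) (tgt a)) :
    L.foldl (fun s i => applyGate s (lo i) (tgt i)) x (tgt i) =
      x (tgt i) + ∏ t ∈ Ico (lo i) (tgt i), x t := by
  induction L generalizing x with
  | nil => cases hi
  | cons a L ih =>
    rw [List.pairwise_cons] at hdistinct
    rw [List.foldl_cons]
    rcases List.mem_cons.1 hi with rfl | hiL
    · rw [foldl_applyGate_of_forall_ne _ _ _ _ fun b hb => (hdistinct.1 b hb).symm]
      exact applyGate_self _ _ _
    · rw [ih _ hiL hdistinct.2 fun a' ha' b hb =>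
          hcontrols a' (List.mem_cons_of_mem _ ha') b (List.mem_cons_of_mem _ hb),
        applyGate_of_ne fun he => hdistinct.1 i hiL he.symm]
      congr 1
      refine prod_congr rfl fun t ht => applyGate_of_ne ?_
      rintro rfl
      exact hcontrols i hi a List.mem_cons_self ht

end Gates

section Ladder

variable {k : ℕ} {α : ℕ → ℕ}

theorem foldl_write_of_forall_ne {β : Type*} (T : ℕ → ℕ) (V : ℕ → β) (L : List ℕ)
    (x : ℕ → β) {j : ℕ} (h : ∀ i ∈ L, T i ≠ j) :
    L.foldl (fun s i => fun p => if p = T i then V i else s p) x j = x j := by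
  induction L generalizing x with
  | nil => rfl
  | cons a L ih =>
    rw [List.foldl_cons, ih _ fun i hi => h i (List.mem_cons_of_mem _ hi)]
    exact if_neg (h a List.mem_cons_self).symm

theorem foldl_write_of_unique {β : Type*} (T : ℕ → ℕ) (V : ℕ → β) {L : List ℕ}
    (x : ℕ → β) {i : ℕ} (hi : i ∈ L) (huniq : ∀ i' ∈ L, T i' = T i → i' = i) :
    L.foldl (fun s i => fun p => if p = T i then V i else s p) x (T i) = V i := by
  induction L generalizing x with
  | nil => cases hi
  | cons a L ih =>
    rw [List.foldl_cons]
    by_cases hiL : i ∈ L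
    · exact ih _ hiL fun i' h1 h2 => huniq i' (List.mem_cons_of_mem _ h1) h2
    · obtain rfl : a = i := (List.mem_cons.1 hi).elim Eq.symm fun h => absurd h hiL
      rw [foldl_write_of_forall_ne _ _ _ _ fun i' h1 h2 =>
        hiL (huniq i' (List.mem_cons_of_mem _ h1) h2 ▸ h1)]
      exact if_pos rfl

theorem foldl_write_rel {β : Type*} (R : β → β → Prop) (T : ℕ → ℕ) (V V' : ℕ → β)
    (L : List ℕ) {s s' : ℕ → β} {w : ℕ} (hs : R (s w) (s' w))
    (hV : ∀ i ∈ L, T i = w → R (V i) (V' i)) :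
    R (L.foldl (fun s i => fun p => if p = T i then V i else s p) s w)
      (L.foldl (fun s i => fun p => if p = T i then V' i else s p) s' w) := by
  induction L generalizing s s' with
  | nil => exact hs
  | cons a L ih =>
    refine ih ?_ fun i hi => hV i (List.mem_cons_of_mem _ hi)
    dsimp only
    split_ifs with hw
    · exact hV a List.mem_cons_self hw.symm
    · exact hs

theorem Lalpha_apply_of_forall_ne (x : ℕ → ZMod 2) {j : ℕ} (h : ∀ i < k - 1, α i ≠ j) :
    Lalpha k α x j = x j :=
  foldl_write_of_forall_ne α _ _ x fun i hi => h i (List.mem_range.1 hi)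

theorem Lalpha_apply_alpha (hα : Set.InjOn α (Set.Iio (k - 1))) (x : ℕ → ZMod 2) {i : ℕ}
    (hi : i < k - 1) :
    Lalpha k α x (α i) = x (α i) + ∏ t ∈ Ico (if i = 0 then 0 else α (i - 1)) (α i), x t :=
  foldl_write_of_unique α _ x (List.mem_range.2 hi) fun _ hi' he =>
    hα (List.mem_range.1 hi') hi he

theorem Lalpha_sub_self_congr {x x' : ℕ → ZMod 2} {w : ℕ} (h : ∀ t < w, x t = x' t) :
    Lalpha k α x w - x w = Lalpha k α x' w - x' w :=
  foldl_write_rel (fun a b => a - x w = b - x' w) α _ _ _ (by simp) fun i _ hi => by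
    subst hi
    rw [add_sub_cancel_left, add_sub_cancel_left]
    exact prod_congr rfl fun t ht => h t (mem_Ico.1 ht).2

theorem Lalpha_bijective : Function.Bijective (Lalpha k α) :=
  bijective_of_unitriangular _ fun _ _ _ => Lalpha_sub_self_congr

end Ladder

section Increasing

variable {k : ℕ} {α : ℕ → ℕ} (hα : StrictMonoOn α (Set.Iio (k - 1)))
include hα

theorem alpha_lt {p q : ℕ} (hpq : p < q) (hq : q < k - 1) : α p < α q :=
  hα (show p < k - 1 by omega) hq hpq

theorem alpha_le {p q : ℕ} (hpq : p ≤ q) (hq : q < k - 1) : α p ≤ α q :=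
  hα.monotoneOn (show p < k - 1 by omega) hq hpq

theorem alpha_ne {p q : ℕ} (hp : p < k - 1) (hq : q < k - 1) (hpq : p ≠ q) : α p ≠ α q :=
  hα.injOn.ne hp hq hpq

theorem add_sub_le_alpha {p q : ℕ} (hpq : p ≤ q) (hq : q < k - 1) : α p + (q - p) ≤ α q := by
  induction q, hpq using Nat.le_induction with
  | base => simp
  | succ q hpq ih =>
    have := alpha_lt hα (p := q) (by omega) hq
    have := ih (by omega)
    omega

theorem eq_of_alpha_mem_Ico {p q : ℕ} (hp : p + 1 < k - 1) (hq : q < k - 1)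
    (h : α q ∈ Ico (α p) (α (p + 1))) : q = p := by
  rw [mem_Ico, hα.le_iff_le (show p < k - 1 by omega) hq,
    hα.lt_iff_lt hq (show p + 1 < k - 1 from hp)] at h
  omega

theorem alpha_ne_of_mem_Ioo {p q w : ℕ} (hp : p + 1 < k - 1) (hq : q < k - 1)
    (hw : w ∈ Ioo (α p) (α (p + 1))) : α q ≠ w := by
  rintro rfl
  obtain rfl := eq_of_alpha_mem_Ico hα hp hq (Ioo_subset_Ico_self hw)
  exact (mem_Ioo.1 hw).1.false

end Increasing

/-- The wire of `X'` that the `t`-th gate of the recursive ladder `L_{α'}` targets: `α_{2t+2}`,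
except `α_{k−3}` for the last gate when `k` is even. -/
def innerTarget (k : ℕ) (α : ℕ → ℕ) (t : ℕ) : ℕ := α (min (2 * t + 2) (k - 3))

/-- The wires of `X'` controlling the `t`-th gate of `L_{α'}`: they form the block of `X'` just
before `innerTarget k α t`. -/
def innerControls (k : ℕ) (α : ℕ → ℕ) (t : ℕ) : List ℕ :=
  α (2 * t) :: (List.range' (α (2 * t) + 1) (α (2 * t + 1) - α (2 * t) - 1) ++
    List.range' (α (2 * t + 1) + 1) (innerTarget k α t - α (2 * t + 1) - 1))

theorem innerTarget_of_lt {k : ℕ} (α : ℕ → ℕ) {t : ℕ} (ht : t < (k + 1) / 2 - 2) :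
    innerTarget k α t = α (2 * t + 2) := by
  rw [innerTarget, min_eq_left (by omega)]

def innerPrefix (k : ℕ) (α : ℕ → ℕ) (t : ℕ) : List ℕ :=
  (List.range t).flatMap (innerControls k α)

theorem innerPrefix_succ (k : ℕ) (α : ℕ → ℕ) (t : ℕ) :
    innerPrefix k α (t + 1) = innerPrefix k α t ++ innerControls k α t := by
  simp [innerPrefix, List.range_succ]

section InnerLadder

variable {k : ℕ} {α : ℕ → ℕ} (hk : 3 ≤ k) (hα : StrictMonoOn α (Set.Iio (k - 1)))
include hk hα

theorem Xlist_eq : Xlist k α = innerPrefix k α (k / 2 - 1) ++ [α (k - 3)] := by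
  set m := (k + 1) / 2 - 2
  have hloop : α 0 :: (List.range' 1 m).flatMap (fun i =>
        List.range' (α (2 * i - 2) + 1) (α (2 * i - 1) - α (2 * i - 2) - 1) ++
        List.range' (α (2 * i - 1) + 1) (α (2 * i) - α (2 * i - 1))) =
      innerPrefix k α m ++ [α (2 * m)] := by
    rw [List.range'_eq_map_range, List.flatMap_map]
    refine (congrArg (List.cons (α 0)) (List.flatMap_congr fun t ht => ?_)).trans
      ((List.cons_flatMap_range_append_singleton (fun t => α (2 * t)) (fun t =>
        List.range' (α (2 * t) + 1) (α (2 * t + 1) - α (2 * t) - 1) ++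
        List.range' (α (2 * t + 1) + 1) (α (2 * t + 2) - α (2 * t + 1) - 1)) m).trans ?_)
    · rw [List.mem_range] at ht
      rw [show 2 * (1 + t) - 2 = 2 * t by omega, show 2 * (1 + t) - 1 = 2 * t + 1 by omega,
        show 2 * (1 + t) = 2 * t + 2 by omega,
        List.range'_succ_sub_eq_append (alpha_lt hα (by omega) (by omega)), List.append_assoc]
      rfl
    · refine congrArg (· ++ _) (List.flatMap_congr fun t ht => ?_)
      rw [List.mem_range] at ht
      rw [innerControls, innerTarget_of_lt α (by omega)]
  unfold Xlist
  rw [hloop]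
  by_cases hpar : k % 2 = 0
  · have hlast : innerControls k α m =
        α (k - 4) :: List.range' (α (k - 4) + 1) (α (k - 3) - α (k - 4) - 1) := by
      rw [innerControls, innerTarget, min_eq_right (by omega), show 2 * m = k - 4 by omega,
        show k - 4 + 1 = k - 3 by omega, Nat.sub_self, Nat.zero_sub, List.range'_zero,
        List.append_nil]
    rw [if_pos hpar, show k / 2 - 1 = m + 1 by omega, innerPrefix_succ, hlast,
      show 2 * m = k - 4 by omega,
      List.range'_succ_sub_eq_append (alpha_lt hα (by omega) (by omega))]
    simp
  · rw [if_neg hpar, List.append_nil, show k / 2 - 1 = m by omega, show 2 * m = k - 3 by omega]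

theorem length_innerPrefix {t : ℕ} (ht : t ≤ (k + 1) / 2 - 2) :
    (innerPrefix k α t).length = α (2 * t) - α 0 - t := by
  induction t with
  | zero => simp [innerPrefix]
  | succ t ih =>
    have h01 := alpha_lt hα (p := 2 * t) (q := 2 * t + 1) (by omega) (by omega)
    have h12 := alpha_lt hα (p := 2 * t + 1) (q := 2 * t + 2) (by omega) (by omega)
    have h0 := add_sub_le_alpha hα (p := 0) (q := 2 * t) (by omega) (by omega)
    rw [innerPrefix_succ, List.length_append, ih (by omega)]
    simp only [innerControls, innerTarget_of_lt α (show t < (k + 1) / 2 - 2 by omega),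
      List.length_cons, List.length_append, List.length_range',
      show 2 * (t + 1) = 2 * t + 2 by ring]
    omega

theorem length_innerPrefix_succ {t : ℕ} (ht : t < k / 2 - 1) :
    (innerPrefix k α (t + 1)).length = alpha' k α t := by
  have h01 := alpha_lt hα (p := 2 * t) (q := 2 * t + 1) (by omega) (by omega)
  have h0 := add_sub_le_alpha hα (p := 0) (q := 2 * t) (by omega) (by omega)
  rw [innerPrefix_succ, List.length_append, length_innerPrefix hk hα (by omega)]
  simp only [innerControls, innerTarget, List.length_cons, List.length_append,
    List.length_range', alpha']
  by_cases hlast : t + 1 ≤ (k + 1) / 2 - 2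
  · have h12 := alpha_lt hα (p := 2 * t + 1) (q := 2 * t + 2) (by omega) (by omega)
    rw [if_pos hlast, min_eq_left (by omega), show 2 * (t + 1) = 2 * t + 2 by ring]
    omega
  · rw [if_neg hlast, min_eq_right (by omega), show k - 3 = 2 * t + 1 by omega]
    omega

theorem alpha'_injOn : Set.InjOn (alpha' k α) (Set.Iio (k / 2 - 1)) := by
  have hmono : StrictMono fun t => (innerPrefix k α t).length :=
    strictMono_nat_of_lt_succ fun t => by simp [innerPrefix_succ, innerControls]
  intro a ha b hb hab
  rw [← length_innerPrefix_succ hk hα ha, ← length_innerPrefix_succ hk hα hb] at hab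
  exact Nat.succ_injective (hmono.injective hab)

theorem lt_innerTarget_of_mem_innerPrefix {t w : ℕ} (ht : t < k / 2 - 1)
    (hw : w ∈ innerPrefix k α (t + 1)) : w < innerTarget k α t := by
  obtain ⟨s, hs, hw⟩ := List.mem_flatMap.1 hw
  rw [List.mem_range] at hs
  have h1 := alpha_lt hα (p := 2 * s) (q := 2 * s + 1) (by omega) (by omega)
  have h2 := alpha_le hα (p := 2 * s + 1) (q := min (2 * s + 2) (k - 3)) (by omega) (by omega)
  have h3 := alpha_le hα (p := min (2 * s + 2) (k - 3)) (q := min (2 * t + 2) (k - 3))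
    (by omega) (by omega)
  simp only [innerControls, innerTarget, List.mem_cons, List.mem_append,
    List.mem_range'_1] at hw ⊢
  omega

theorem exists_Xlist_eq_append_cons {t : ℕ} (ht : t < k / 2 - 1) :
    ∃ suf, Xlist k α = innerPrefix k α (t + 1) ++ innerTarget k α t :: suf := by
  obtain ⟨r, hr⟩ : ∃ r, k / 2 - 1 = t + 1 + r := ⟨k / 2 - 1 - (t + 1), by omega⟩
  rw [Xlist_eq hk hα, hr, innerPrefix, List.range_add, List.flatMap_append, ← innerPrefix,
    List.append_assoc]
  rcases r with _ | r
  · refine ⟨[], ?_⟩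
    rw [innerTarget, min_eq_right (by omega)]
    rfl
  · rw [innerTarget_of_lt α (by omega), show 2 * t + 2 = 2 * (t + 1) by ring,
      List.range_succ_eq_map, List.map_cons, List.flatMap_cons, add_zero, innerControls]
    exact ⟨_, rfl⟩

theorem idxOf_innerTarget {t : ℕ} (ht : t < k / 2 - 1) :
    (Xlist k α).idxOf (innerTarget k α t) = alpha' k α t := by
  obtain ⟨suf, hX⟩ := exists_Xlist_eq_append_cons hk hα ht
  rw [hX, List.idxOf_append_of_notMem fun h =>
      (lt_innerTarget_of_mem_innerPrefix hk hα ht h).false,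
    List.idxOf_cons_self, add_zero, length_innerPrefix_succ hk hα ht]

theorem getD_Xlist_alpha' {t : ℕ} (ht : t < k / 2 - 1) :
    (Xlist k α).getD (alpha' k α t) 0 = innerTarget k α t := by
  obtain ⟨suf, hX⟩ := exists_Xlist_eq_append_cons hk hα ht
  rw [hX, ← length_innerPrefix_succ hk hα ht, List.getD_append_right _ _ _ _ le_rfl,
    Nat.sub_self, List.getD_cons_zero]

theorem prod_Ico_getD_Xlist {t : ℕ} (ht : t < k / 2 - 1) (f : ℕ → ZMod 2) :
    ∏ p ∈ Ico (if t = 0 then 0 else alpha' k α (t - 1)) (alpha' k α t),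
      f ((Xlist k α).getD p 0) = ((innerControls k α t).map f).prod := by
  obtain ⟨suf, hX⟩ := exists_Xlist_eq_append_cons hk hα ht
  have hlo : (if t = 0 then 0 else alpha' k α (t - 1)) = (innerPrefix k α t).length := by
    rcases t with _ | t
    · rfl
    · rw [if_neg t.succ_ne_zero, Nat.add_sub_cancel, length_innerPrefix_succ hk hα (by omega)]
  rw [hX, hlo, ← length_innerPrefix_succ hk hα ht, innerPrefix_succ, List.append_assoc,
    List.length_append]
  exact List.prod_Ico_getD_append _ _ _ _ f

theorem UX_apply_of_forall_ne (y : ℕ → ZMod 2) {w : ℕ}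
    (hw : ∀ t < k / 2 - 1, innerTarget k α t ≠ w) : UX k α y w = y w := by
  unfold UX
  split_ifs with hmem
  · have hgw : (Xlist k α).getD ((Xlist k α).idxOf w) 0 = w := by
      rw [List.getD_eq_getElem _ _ (List.idxOf_lt_length_iff.2 hmem), List.getElem_idxOf]
    rw [Lalpha_apply_of_forall_ne _ fun t ht he => hw t ht ?_, hgw]
    rw [← hgw, ← he, getD_Xlist_alpha' hk hα ht]
  · rfl

theorem UX_apply_innerTarget (y : ℕ → ZMod 2) {t : ℕ} (ht : t < k / 2 - 1) :
    UX k α y (innerTarget k α t) =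
      y (innerTarget k α t) + ((innerControls k α t).map y).prod := by
  obtain ⟨suf, hX⟩ := exists_Xlist_eq_append_cons hk hα ht
  have hmem : innerTarget k α t ∈ Xlist k α := by simp [hX]
  rw [UX, if_pos hmem, idxOf_innerTarget hk hα ht,
    Lalpha_apply_alpha (alpha'_injOn hk hα) _ ht, getD_Xlist_alpha' hk hα ht,
    prod_Ico_getD_Xlist hk hα ht]

end InnerLadder

section Layers

variable {k : ℕ} {α : ℕ → ℕ}

theorem UL_apply_of_forall_ne (x : ℕ → ZMod 2) {j : ℕ}
    (hodd : ∀ t < (k + 1) / 2 - 2, α (2 * t + 1) ≠ j) (hlast : α (k - 2) ≠ j) :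
    UL k α x j = x j := by
  rw [UL, applyGate_of_ne hlast.symm]
  refine foldl_applyGate_of_forall_ne _ _ _ _ fun i hi => ?_
  rw [List.mem_range'_1] at hi
  simpa only [show 2 * (i - 1) + 1 = 2 * i - 1 by omega] using hodd (i - 1) (by omega)

theorem UR_apply_of_forall_ne (z : ℕ → ZMod 2) {j : ℕ} (hzero : α 0 ≠ j)
    (heven : ∀ t < (k + 1) / 2 - 2, α (2 * t + 2) ≠ j) :
    UR k α z j = z j := by
  rw [UR, foldl_applyGate_of_forall_ne _ _ _ _ fun i hi => ?_, applyGate_of_ne hzero.symm]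
  rw [List.mem_range'_1] at hi
  simpa only [show 2 * (i - 1) + 2 = 2 * i by omega] using heven (i - 1) (by omega)

variable (hk : 3 ≤ k) (hα : StrictMonoOn α (Set.Iio (k - 1)))
include hk hα

theorem UL_apply_odd (x : ℕ → ZMod 2) {t : ℕ} (ht : t < (k + 1) / 2 - 2) :
    UL k α x (α (2 * t + 1)) = x (α (2 * t + 1)) + ∏ w ∈ Ico (α (2 * t)) (α (2 * t + 1)), x w := by
  have h := foldl_applyGate_target (fun i => α (2 * i - 2)) (fun i => α (2 * i - 1)) x
    (L := List.range' 1 ((k + 1) / 2 - 2)) (i := t + 1)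
    (List.mem_range'_1.2 ⟨Nat.le_add_left 1 t, by omega⟩) ?_ fun a ha b hb hmem => ?_
  · rw [UL, applyGate_of_ne (alpha_ne hα (by omega) (by omega) (by omega))]
    simpa only [show 2 * (t + 1) - 1 = 2 * t + 1 by omega, show 2 * (t + 1) - 2 = 2 * t by omega]
      using h
  · refine (List.pairwise_lt_range' 1).imp_of_mem fun ha hb hab => ?_
    rw [List.mem_range'_1] at ha hb
    exact alpha_ne hα (by omega) (by omega) (by omega)
  · rw [List.mem_range'_1] at ha hb
    rw [show 2 * a - 1 = 2 * a - 2 + 1 by omega] at hmem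
    have := eq_of_alpha_mem_Ico hα (by omega) (by omega) hmem
    omega

theorem UL_apply_last (x : ℕ → ZMod 2) :
    UL k α x (α (k - 2)) = x (α (k - 2)) + ∏ t ∈ Ico (α (k - 3)) (α (k - 2)), x t := by
  have hfold : ∀ w, α (k - 3) ≤ w → (List.range' 1 ((k + 1) / 2 - 2)).foldl
      (fun s i => applyGate s (α (2 * i - 2)) (α (2 * i - 1))) x w = x w :=
    fun w hw => foldl_applyGate_of_forall_ne _ _ _ _ fun i hi => by
      rw [List.mem_range'_1] at hi
      have := alpha_lt hα (p := 2 * i - 1) (q := k - 3) (by omega) (by omega)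
      omega
  rw [UL, applyGate_self, hfold _ (alpha_lt hα (by omega) (by omega)).le]
  exact congrArg _ (prod_congr rfl fun w hw => hfold w (mem_Ico.1 hw).1)

theorem UR_apply_zero (z : ℕ → ZMod 2) :
    UR k α z (α 0) = z (α 0) + ∏ t ∈ Ico 0 (α 0), z t := by
  rw [UR, foldl_applyGate_of_forall_ne _ _ _ _ fun i hi => ?_, applyGate_self]
  rw [List.mem_range'_1] at hi
  exact alpha_ne hα (by omega) (by omega) (by omega)

theorem UR_apply_even (z : ℕ → ZMod 2) {t : ℕ} (ht : t < (k + 1) / 2 - 2) :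
    UR k α z (α (2 * t + 2)) =
      z (α (2 * t + 2)) + ∏ w ∈ Ico (α (2 * t + 1)) (α (2 * t + 2)), z w := by
  have h := foldl_applyGate_target (fun i => α (2 * i - 1)) (fun i => α (2 * i))
    (applyGate z 0 (α 0)) (L := List.range' 1 ((k + 1) / 2 - 2)) (i := t + 1)
    (List.mem_range'_1.2 ⟨Nat.le_add_left 1 t, by omega⟩) ?_
    fun a ha b hb hmem => ?_
  · simp only [show 2 * (t + 1) = 2 * t + 2 by ring] at h
    have h0 := alpha_lt hα (p := 0) (q := 2 * t + 1) (by omega) (by omega)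
    rw [UR, h, applyGate_of_ne (alpha_ne hα (by omega) (by omega) (by omega))]
    exact congrArg _ (prod_congr rfl fun w hw => applyGate_of_ne (by rw [mem_Ico] at hw; omega))
  · refine (List.pairwise_lt_range' 1).imp_of_mem fun ha hb hab => ?_
    rw [List.mem_range'_1] at ha hb
    exact alpha_ne hα (by omega) (by omega) (by omega)
  · rw [List.mem_range'_1] at ha hb
    rw [show 2 * a = 2 * a - 1 + 1 by omega] at hmem
    have := eq_of_alpha_mem_Ico hα (by omega) (by omega) hmem
    omega

end Layers

section Decomposition

variable {k : ℕ} {α : ℕ → ℕ} (hk : 3 ≤ k) (hα : StrictMonoOn α (Set.Iio (k - 1)))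
  (x : ℕ → ZMod 2)
include hk hα

theorem UX_UL_apply_of_forall_ne {j : ℕ} (hj : ∀ q < k - 1, α q ≠ j) :
    UX k α (UL k α x) j = x j := by
  rw [UX_apply_of_forall_ne hk hα _ fun s _ => hj _ (by omega),
    UL_apply_of_forall_ne _ (fun s _ => hj _ (by omega)) (hj _ (by omega))]

theorem UL_apply_of_mem_innerControls {t w : ℕ} (ht : t < k / 2 - 1)
    (hw : w ∈ innerControls k α t) : UL k α x w = x w := by
  rcases List.mem_cons.1 hw with rfl | hw
  · exact UL_apply_of_forall_ne _ (fun s _ => alpha_ne hα (by omega) (by omega) (by omega))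
      (alpha_ne hα (by omega) (by omega) (by omega))
  have hle := alpha_le hα (p := min (2 * t + 2) (k - 3)) (q := 2 * t + 2) (by omega) (by omega)
  have hIoo : w ∈ Ioo (α (2 * t)) (α (2 * t + 1)) ∨ w ∈ Ioo (α (2 * t + 1)) (α (2 * t + 2)) := by
    simp only [innerTarget, List.mem_append, List.mem_range'_1, mem_Ioo] at hw ⊢
    omega
  have hj : ∀ q < k - 1, α q ≠ w := fun q hq => hIoo.elim
    (alpha_ne_of_mem_Ioo hα (by omega) hq) (alpha_ne_of_mem_Ioo hα (by omega) hq)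
  exact UL_apply_of_forall_ne _ (fun s _ => hj _ (by omega)) (hj _ (by omega))

theorem prod_map_innerControls_UL {t : ℕ} (ht : t < k / 2 - 1) :
    ((innerControls k α t).map (UL k α x)).prod =
      (∏ w ∈ Ico (α (2 * t)) (α (2 * t + 1)), x w) *
        ∏ w ∈ Ioo (α (2 * t + 1)) (innerTarget k α t), x w := by
  rw [List.map_congr_left fun w hw => UL_apply_of_mem_innerControls hk hα x ht hw, innerControls,
    List.map_cons, List.prod_cons, List.map_append, List.prod_append,
    List.prod_map_range'_eq_prod_Ioo, List.prod_map_range'_eq_prod_Ioo,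
    Ico_eq_cons_Ioo (alpha_lt hα (by omega) (by omega)), prod_cons, mul_assoc]

theorem UR_UX_UL_apply_of_forall_ne {j : ℕ} (hj : ∀ q < k - 1, α q ≠ j) :
    UR k α (UX k α (UL k α x)) j = x j := by
  rw [UR_apply_of_forall_ne _ (hj 0 (by omega)) fun s _ => hj _ (by omega),
    UX_UL_apply_of_forall_ne hk hα x hj]

theorem UR_UX_UL_apply_zero :
    UR k α (UX k α (UL k α x)) (α 0) = x (α 0) + ∏ w ∈ Ico 0 (α 0), x w := by
  rw [UR_apply_zero hk hα, UX_apply_of_forall_ne hk hα _ fun s _ =>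
      alpha_ne hα (by omega) (by omega) (by omega),
    UL_apply_of_forall_ne _ (fun s _ => alpha_ne hα (by omega) (by omega) (by omega))
      (alpha_ne hα (by omega) (by omega) (by omega))]
  refine congrArg _ (prod_congr rfl fun w hw => UX_UL_apply_of_forall_ne hk hα x fun q hq => ?_)
  have := alpha_le hα (Nat.zero_le q) hq
  rw [mem_Ico] at hw
  omega

theorem UR_UX_UL_apply_odd {t : ℕ} (ht : t < (k + 1) / 2 - 2) :
    UR k α (UX k α (UL k α x)) (α (2 * t + 1)) =
      x (α (2 * t + 1)) + ∏ w ∈ Ico (α (2 * t)) (α (2 * t + 1)), x w := by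
  rw [UR_apply_of_forall_ne _ (alpha_ne hα (by omega) (by omega) (by omega))
      fun s _ => alpha_ne hα (by omega) (by omega) (by omega),
    UX_apply_of_forall_ne hk hα _ fun s _ => alpha_ne hα (by omega) (by omega) (by omega),
    UL_apply_odd hk hα x ht]

theorem UR_UX_UL_apply_sub_two :
    UR k α (UX k α (UL k α x)) (α (k - 2)) =
      x (α (k - 2)) + ∏ w ∈ Ico (α (k - 3)) (α (k - 2)), x w := by
  rw [UR_apply_of_forall_ne _ (alpha_ne hα (by omega) (by omega) (by omega))
      fun s _ => alpha_ne hα (by omega) (by omega) (by omega),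
    UX_apply_of_forall_ne hk hα _ fun s _ => alpha_ne hα (by omega) (by omega) (by omega),
    UL_apply_last hk hα x]

theorem UR_UX_UL_apply_even {t : ℕ} (ht : t < (k + 1) / 2 - 2) :
    UR k α (UX k α (UL k α x)) (α (2 * t + 2)) =
      x (α (2 * t + 2)) + ∏ w ∈ Ico (α (2 * t + 1)) (α (2 * t + 2)), x w := by
  have hUX := UX_apply_innerTarget hk hα (UL k α x) (t := t) (by omega)
  rw [prod_map_innerControls_UL hk hα x (by omega), innerTarget_of_lt α ht,
    UL_apply_of_forall_ne _ (fun s _ => alpha_ne hα (by omega) (by omega) (by omega))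
      (alpha_ne hα (by omega) (by omega) (by omega))] at hUX
  have hIoo : ∀ w ∈ Ioo (α (2 * t + 1)) (α (2 * t + 2)), UX k α (UL k α x) w = x w :=
    fun w hw => UX_UL_apply_of_forall_ne hk hα x fun q hq =>
      alpha_ne_of_mem_Ioo hα (by omega) hq hw
  have hodd : UX k α (UL k α x) (α (2 * t + 1)) =
      x (α (2 * t + 1)) + ∏ w ∈ Ico (α (2 * t)) (α (2 * t + 1)), x w := by
    rw [UX_apply_of_forall_ne hk hα _ fun s _ => alpha_ne hα (by omega) (by omega) (by omega),
      UL_apply_odd hk hα x ht]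
  have hlt := alpha_lt hα (p := 2 * t + 1) (q := 2 * t + 2) (by omega) (by omega)
  rw [UR_apply_even hk hα _ ht, hUX, Ico_eq_cons_Ioo hlt, prod_cons, prod_cons, hodd,
    prod_congr rfl hIoo]
  linear_combination CharTwo.add_self_eq_zero ((∏ w ∈ Ico (α (2 * t)) (α (2 * t + 1)), x w) *
    ∏ w ∈ Ioo (α (2 * t + 1)) (α (2 * t + 2)), x w)

theorem UR_UX_UL_apply_sub_three (hpar : k % 2 = 0) :
    UR k α (UX k α (UL k α x)) (α (k - 3)) =
      x (α (k - 3)) + ∏ w ∈ Ico (α (k - 4)) (α (k - 3)), x w := by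
  have hUX := UX_apply_innerTarget hk hα (UL k α x) (t := k / 2 - 2) (by omega)
  rw [prod_map_innerControls_UL hk hα x (by omega), innerTarget,
    min_eq_right (by omega), show 2 * (k / 2 - 2) = k - 4 by omega,
    show k - 4 + 1 = k - 3 by omega, Ioo_self, prod_empty, mul_one,
    UL_apply_of_forall_ne _ (fun s _ => alpha_ne hα (by omega) (by omega) (by omega))
      (alpha_ne hα (by omega) (by omega) (by omega))] at hUX
  rw [UR_apply_of_forall_ne _ (alpha_ne hα (by omega) (by omega) (by omega))
      fun s _ => alpha_ne hα (by omega) (by omega) (by omega), hUX]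

theorem UR_UX_UL_apply_alpha {q : ℕ} (hq : q < k - 1) :
    UR k α (UX k α (UL k α x)) (α q) = Lalpha k α x (α q) := by
  rw [Lalpha_apply_alpha hα.injOn x hq]
  by_cases h0 : q = 0
  · subst h0
    exact UR_UX_UL_apply_zero hk hα x
  rw [if_neg h0]
  by_cases hlast : q = k - 2
  · rw [hlast, show k - 2 - 1 = k - 3 by omega]
    exact UR_UX_UL_apply_sub_two hk hα x
  by_cases hpar : k % 2 = 0 ∧ q = k - 3
  · rw [hpar.2, show k - 3 - 1 = k - 4 by omega]
    exact UR_UX_UL_apply_sub_three hk hα x hpar.1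
  rcases Nat.even_or_odd' q with ⟨t, rfl | rfl⟩
  · obtain ⟨t, rfl⟩ : ∃ s, t = s + 1 := ⟨t - 1, by omega⟩
    rw [show 2 * (t + 1) = 2 * t + 2 by ring, show 2 * t + 2 - 1 = 2 * t + 1 by omega]
    exact UR_UX_UL_apply_even hk hα x (by omega)
  · rw [Nat.add_sub_cancel]
    exact UR_UX_UL_apply_odd hk hα x (by omega)

theorem UR_UX_UL_eq_Lalpha : UR k α (UX k α (UL k α x)) = Lalpha k α x := by
  funext j
  by_cases hj : ∃ q < k - 1, α q = j
  · obtain ⟨q, hq, rfl⟩ := hj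
    exact UR_UX_UL_apply_alpha hk hα x hq
  · simp only [not_exists, not_and] at hj
    rw [UR_UX_UL_apply_of_forall_ne hk hα x hj, Lalpha_apply_of_forall_ne x hj]

end Decomposition

end MCXLadder

/-- for every strictly increasing vector `α` of `k−1` nonnegative
integers with `k ≥ 3`, the operator `L_α` is a bijection and
`U_R ∘ U_{X'} ∘ U_L = L_α`. -/
theorem ladder_alpha_decomposition (k : ℕ) (hk : 3 ≤ k) (α : ℕ → ℕ)
    (hmono : ∀ i j, i < j → j < k - 1 → α i < α j) :
    Function.Bijective (Lalpha k α) ∧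
      ∀ x : ℕ → ZMod 2, UR k α (UX k α (UL k α x)) = Lalpha k α x :=
  ⟨MCXLadder.Lalpha_bijective,
    MCXLadder.UR_UX_UL_eq_Lalpha hk fun i _ j hj hij => hmono i j hij hj⟩
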